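/- arXiv:2404.01228 — 2 statements merged into one kernel-verified Lean document; each statement's English description precedes it below -/
import Mathlib

section
/- Let T ⊂ ℝ^n be a nondegenerate simplex and p ∈ ℕ, and let C ≥ 0 be a constant such that every smooth f : ℝ^n → ℝ satisfies ‖∇(f − Π_{p+1} f)‖_{L²(T;ℝ^n)} ≤ C · ‖∇f − Π_p(∇f)‖_{L²(T;ℝ^n)}. Then every smooth f : ℝ^n → ℝ also satisfies ‖∇(Π_{p+1} f)‖_{L²(T;ℝ^n)} ≤ C · ‖∇f‖_{L²(T;ℝ^n)}. (The H¹-seminorm operator norm of the L² projection Π_{p+1} is bounded by the stability constant C_{st,1}.) -/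
open MeasureTheory

noncomputable section

abbrev E (n : ℕ) : Type := EuclideanSpace ℝ (Fin n)

/-- `T` is a nondegenerate simplex: the convex hull of `n+1` affinely independent points. -/
def IsSimplex {n : ℕ} (T : Set (E n)) : Prop :=
  ∃ v : Fin (n + 1) → E n, AffineIndependent ℝ v ∧ T = convexHull ℝ (Set.range v)

/-- `g` is (the function of) a real polynomial on `ℝ^n` of total degree at most `m`. -/
def IsPolyDeg {n : ℕ} (m : ℕ) (g : E n → ℝ) : Prop :=
  ∃ P : MvPolynomial (Fin n) ℝ, P.totalDegree ≤ m ∧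
    ∀ x : E n, g x = MvPolynomial.eval (fun i => x i) P

/-- A polynomial vector field of total degree at most `m` (componentwise). -/
def IsPolyVF {n : ℕ} (m : ℕ) (q : E n → E n) : Prop :=
  ∀ j : Fin n, IsPolyDeg m (fun x => q x j)

/-- The `L²(T)` norm of a function. -/
def L2 {n : ℕ} (T : Set (E n)) {α : Type*} [NormedAddCommGroup α] (g : E n → α) : ℝ :=
  Real.sqrt (∫ x in T, ‖g x‖ ^ 2)

/-- `g = Π_m f` is the `L²(T)`-orthogonal projection of `f` onto `P_m(T)`:
`g` is a polynomial of degree at most `m` and `f - g ⊥ P_m(T)` in `L²(T)`. -/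
def IsL2Proj {n : ℕ} (m : ℕ) (T : Set (E n)) (f g : E n → ℝ) : Prop :=
  IsPolyDeg m g ∧ ∀ q : E n → ℝ, IsPolyDeg m q → (∫ x in T, (f x - g x) * q x) = 0

/-- The componentwise `L²(T)`-orthogonal projection of a vector field onto `P_m(T;ℝ^n)`. -/
def IsL2ProjVF {n : ℕ} (m : ℕ) (T : Set (E n)) (f g : E n → E n) : Prop :=
  IsPolyVF m g ∧ ∀ q : E n → E n, IsPolyVF m q →
    (∫ x in T, (inner ℝ (f x - g x) (q x) : ℝ)) = 0


set_option maxHeartbeats 1000000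

open MvPolynomial InnerProductSpace
open scoped ENNReal NNReal

variable {n : ℕ} {T : Set (E n)}


def pev (P : MvPolynomial (Fin n) ℝ) : E n → ℝ := fun x => MvPolynomial.eval (fun i => x i) P

lemma pev_C (a : ℝ) : pev (C a : MvPolynomial (Fin n) ℝ) = fun _ => a := by
  funext x; simp [pev]

lemma pev_add (p q : MvPolynomial (Fin n) ℝ) : pev (p + q) = pev p + pev q := by
  funext x; simp [pev]

lemma pev_proj (i : Fin n) : (fun x : E n => x i) = ⇑(EuclideanSpace.proj (𝕜 := ℝ) i) := by
  funext x; simp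

lemma pev_mul_X (p : MvPolynomial (Fin n) ℝ) (i : Fin n) :
    pev (p * X i) = fun x => pev p x * x i := by funext x; simp [pev]

lemma pev_contDiff (P : MvPolynomial (Fin n) ℝ) : ContDiff ℝ (⊤:ℕ∞) (pev P) := by
  induction P using MvPolynomial.induction_on with
  | C a => rw [pev_C]; exact contDiff_const
  | add p q hp hq => rw [pev_add]; exact hp.add hq
  | mul_X p i hp => rw [pev_mul_X]; exact hp.mul (by rw [pev_proj i]; exact (EuclideanSpace.proj (𝕜 := ℝ) i).contDiff)

lemma pev_analyticOnNhd (P : MvPolynomial (Fin n) ℝ) :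
    AnalyticOnNhd ℝ (pev P) Set.univ := by
  induction P using MvPolynomial.induction_on with
  | C a => rw [pev_C]; exact analyticOnNhd_const
  | add p q hp hq => rw [pev_add]; exact hp.add hq
  | mul_X p i hp =>
    rw [pev_mul_X]
    refine hp.mul (fun x _ => ?_)
    rw [pev_proj i]
    exact (EuclideanSpace.proj (𝕜 := ℝ) i).analyticAt x

lemma pev_hasFDerivAt (P : MvPolynomial (Fin n) ℝ) (x : E n) :
    HasFDerivAt (pev P) (∑ j : Fin n, pev (pderiv j P) x • (EuclideanSpace.proj (𝕜 := ℝ) j)) x := by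
  induction P using MvPolynomial.induction_on with
  | C a =>
    have h : pev (C a : MvPolynomial (Fin n) ℝ) = fun _ => a := by funext x; simp [pev]
    have h0 : (∑ j : Fin n, pev (pderiv j (C a : MvPolynomial (Fin n) ℝ)) x
        • (EuclideanSpace.proj (𝕜 := ℝ) j)) = 0 := by
      simp [pderiv_C, pev]
    rw [h, h0]; exact hasFDerivAt_const a x
  | add p q hp hq =>
    have h : pev (p + q) = fun y => pev p y + pev q y := by funext y; simp [pev]
    have h0 : (∑ j : Fin n, pev (pderiv j (p + q)) x • (EuclideanSpace.proj (𝕜 := ℝ) j))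
        = (∑ j : Fin n, pev (pderiv j p) x • (EuclideanSpace.proj (𝕜 := ℝ) j))
        + (∑ j : Fin n, pev (pderiv j q) x • (EuclideanSpace.proj (𝕜 := ℝ) j)) := by
      rw [← Finset.sum_add_distrib]
      refine Finset.sum_congr rfl fun j _ => ?_
      simp [pev, add_smul]
    rw [h, h0]; exact hp.add hq
  | mul_X p i hp =>
    have h : pev (p * X i) = fun y => pev p y * y i := by funext y; simp [pev]
    have hproj : HasFDerivAt (fun y : E n => y i) (EuclideanSpace.proj (𝕜 := ℝ) i) x :=
      (EuclideanSpace.proj (𝕜 := ℝ) i).hasFDerivAt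
    have key := hp.mul hproj
    rw [h]
    have hterm : ∀ j : Fin n, pev (pderiv j (p * X i)) x
        = pev (pderiv j p) x * x i + pev p x * (if i = j then 1 else 0) := by
      intro j
      simp [pev, pderiv_mul, pderiv_X, Pi.single_apply]
      split <;> simp [add_comm, mul_comm]
    have h0 : (∑ j : Fin n, pev (pderiv j (p * X i)) x • (EuclideanSpace.proj (𝕜 := ℝ) j))
        = pev p x • EuclideanSpace.proj (𝕜 := ℝ) i
          + x i • ∑ j : Fin n, pev (pderiv j p) x • (EuclideanSpace.proj (𝕜 := ℝ) j) := by
      ext v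
      simp only [ContinuousLinearMap.sum_apply, ContinuousLinearMap.smul_apply,
        ContinuousLinearMap.add_apply, PiLp.proj_apply, smul_eq_mul,
        ContinuousLinearMap.coe_smul', Pi.smul_apply, Finset.smul_sum]
      calc ∑ j : Fin n, pev (pderiv j (p * X i)) x * v j
          = ∑ j : Fin n, (x i * (pev (pderiv j p) x * v j)
              + (if i = j then pev p x * v j else 0)) := by
            refine Finset.sum_congr rfl fun j _ => ?_
            rw [hterm j]; split <;> ring
        _ = pev p x * v i + ∑ j : Fin n, x i * (pev (pderiv j p) x * v j) := by
            rw [Finset.sum_add_distrib, Finset.sum_ite_eq Finset.univ i (fun j => pev p x * v j)]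
            simp [add_comm]
    rw [h0]; exact key

def pgrad (P : MvPolynomial (Fin n) ℝ) (x : E n) : E n :=
  WithLp.toLp 2 (fun j => pev (pderiv j P) x : Fin n → ℝ)

lemma pev_hasGradientAt (P : MvPolynomial (Fin n) ℝ) (x : E n) :
    HasGradientAt (pev P) (pgrad P x) x := by
  have h := pev_hasFDerivAt P x
  have : (toDual ℝ (E n)) (pgrad P x)
      = ∑ j : Fin n, pev (pderiv j P) x • (EuclideanSpace.proj (𝕜 := ℝ) j) := by
    ext v
    simp only [toDual_apply_apply, ContinuousLinearMap.sum_apply, ContinuousLinearMap.smul_apply,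
      PiLp.proj_apply, smul_eq_mul, PiLp.inner_apply, RCLike.inner_apply, conj_trivial]
    exact Finset.sum_congr rfl fun j _ => mul_comm _ _
  rw [HasGradientAt, HasGradientAtFilter, this]
  exact h

lemma pev_gradient (P : MvPolynomial (Fin n) ℝ) : gradient (pev P) = pgrad P :=
  funext fun x => (pev_hasGradientAt P x).gradient

lemma totalDegree_pderiv_le (j : Fin n) (P : MvPolynomial (Fin n) ℝ) {m : ℕ}
    (h : P.totalDegree ≤ m + 1) : (pderiv j P).totalDegree ≤ m := by
  conv_lhs => rw [← support_sum_monomial_coeff P]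
  rw [map_sum]
  refine (totalDegree_finset_sum _ _).trans (Finset.sup_le fun d hd => ?_)
  by_cases hdj : d j = 0
  · simp [pderiv_monomial, hdj]
  · rw [pderiv_monomial]
    refine (totalDegree_monomial_le _ _).trans ?_
    show (d - Finsupp.single j 1).sum (fun _ e => e) ≤ m
    have hle : Finsupp.single j 1 ≤ d := by
      rw [Finsupp.single_le_iff]; omega
    have hsum : (d - Finsupp.single j 1).sum (fun _ e => e) + (Finsupp.single j 1).sum (fun _ e => e)
        = d.sum (fun _ e => e) := by
      rw [← Finsupp.sum_add_index (by simp) (by simp), tsub_add_cancel_of_le hle]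
    have hds : d.sum (fun _ e => e) ≤ m + 1 :=
      le_trans (le_totalDegree hd) h
    rw [Finsupp.sum_single_index rfl] at hsum
    omega

lemma IsSimplex.isCompact (hT : IsSimplex T) : IsCompact T := by
  obtain ⟨v, -, rfl⟩ := hT
  exact (Set.finite_range v).isCompact_convexHull ℝ

lemma IsSimplex.measurableSet (hT : IsSimplex T) : MeasurableSet T :=
  hT.isCompact.isClosed.measurableSet

theorem isSimplex_finiteMeasure (hT : IsSimplex T) :
    IsFiniteMeasure (volume.restrict T) := by
  constructor
  rw [Measure.restrict_apply_univ]
  exact hT.isCompact.measure_lt_top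

lemma IsSimplex.interior_nonempty (hT : IsSimplex T) : (interior T).Nonempty := by
  obtain ⟨v, hv, rfl⟩ := hT
  rw [(convex_convexHull ℝ _).interior_nonempty_iff_affineSpan_eq_top, affineSpan_convexHull,
    hv.affineSpan_eq_top_iff_card_eq_finrank_add_one]
  simp [finrank_euclideanSpace_fin]

lemma memℒp_of_continuous {α : Type*} [NormedAddCommGroup α] {g : E n → α}
    (hg : Continuous g) (hT : IsSimplex T) : MemLp g 2 (volume.restrict T) := by
  haveI := isSimplex_finiteMeasure hT
  obtain ⟨Cb, hCb⟩ := hT.isCompact.exists_bound_of_continuousOn hg.continuousOn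
  exact MemLp.of_bound hg.aestronglyMeasurable Cb
    (((ae_restrict_mem hT.measurableSet).mono fun x hx => hCb x hx))

lemma L2_eq_norm_toLp {α : Type*} [NormedAddCommGroup α] {g : E n → α}
    (hg : MemLp g 2 (volume.restrict T)) : L2 T g = ‖hg.toLp g‖ := by
  rw [Lp.norm_toLp, hg.eLpNorm_eq_integral_rpow_norm two_ne_zero ENNReal.ofNat_ne_top,
    ENNReal.toReal_ofReal (by positivity)]
  unfold L2
  rw [Real.sqrt_eq_rpow]
  norm_num

lemma inner_toLp {α : Type*} [NormedAddCommGroup α] [InnerProductSpace ℝ α] {g h : E n → α}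
    (hg : MemLp g 2 (volume.restrict T)) (hh : MemLp h 2 (volume.restrict T)) :
    (inner ℝ (hg.toLp g) (hh.toLp h) : ℝ) = ∫ x in T, (inner ℝ (g x) (h x) : ℝ) := by
  rw [L2.inner_def]
  exact integral_congr_ae (by
    filter_upwards [hg.coeFn_toLp, hh.coeFn_toLp] with x hx hy
    rw [hx, hy])

lemma exists_ortho {α : Type*} [NormedAddCommGroup α] [InnerProductSpace ℝ α]
    (V : Type) [AddCommGroup V] [Module ℝ V] [Module.Finite ℝ V]
    (Φ₀ : V →ₗ[ℝ] (E n → α)) (hmem : ∀ v, MemLp (Φ₀ v) 2 (volume.restrict T))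
    (h : E n → α) (hh : MemLp h 2 (volume.restrict T)) :
    ∃ v : V, ∀ w : V, (∫ x in T, (inner ℝ (h x - Φ₀ v x) (Φ₀ w x) : ℝ)) = 0 := by
  set μ := volume.restrict T
  let Φ : V →ₗ[ℝ] Lp α 2 μ :=
    { toFun := fun v => (hmem v).toLp (Φ₀ v)
      map_add' := fun v w =>
        (MemLp.toLp_congr (hmem (v + w)) ((hmem v).add (hmem w))
          (Filter.EventuallyEq.of_eq (map_add Φ₀ v w))).trans
          (MemLp.toLp_add (hmem v) (hmem w))
      map_smul' := fun c v =>
        (MemLp.toLp_congr (hmem (c • v)) ((hmem v).const_smul c)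
          (Filter.EventuallyEq.of_eq (map_smul Φ₀ c v))).trans
          (MemLp.toLp_const_smul c (hmem v)) }
  let W : Submodule ℝ (Lp α 2 μ) := LinearMap.range Φ
  haveI : FiniteDimensional ℝ W := inferInstance
  obtain ⟨v, hv⟩ : ∃ v : V, Φ v = W.starProjection (hh.toLp h) :=
    W.starProjection_apply_mem (hh.toLp h)
  refine ⟨v, fun w => ?_⟩
  have hmemW : Φ w ∈ W := LinearMap.mem_range_self Φ w
  have horth := W.starProjection_inner_eq_zero (hh.toLp h) (Φ w) hmemW
  rw [← hv] at horth
  have hsub : hh.toLp h - Φ v = ((hh.sub (hmem v)).toLp (h - Φ₀ v)) :=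
    (MemLp.toLp_sub hh (hmem v)).symm
  rw [hsub] at horth
  exact (inner_toLp (hh.sub (hmem v)) (hmem w)).symm.trans horth

/-- the scalar realization map -/
def Φs (m : ℕ) : restrictTotalDegree (Fin n) ℝ m →ₗ[ℝ] (E n → ℝ) where
  toFun q := pev (q : MvPolynomial (Fin n) ℝ)
  map_add' q q' := by funext x; simp [pev]
  map_smul' c q := by funext x; simp [pev]

/-- the vector realization map -/
def Φv (m : ℕ) : (Fin n → restrictTotalDegree (Fin n) ℝ m) →ₗ[ℝ] (E n → E n) where
  toFun q := fun x => WithLp.toLp 2 (fun j => pev ((q j : MvPolynomial (Fin n) ℝ)) x : Fin n → ℝ)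
  map_add' q q' := by funext x; ext j; simp [pev]
  map_smul' c q := by funext x; ext j; simp [pev]

lemma Φs_isPolyDeg (m : ℕ) (q : restrictTotalDegree (Fin n) ℝ m) : IsPolyDeg m (Φs m q) :=
  ⟨q, (mem_restrictTotalDegree _ _ _).1 q.2, fun _ => rfl⟩

lemma Φv_isPolyVF (m : ℕ) (q : Fin n → restrictTotalDegree (Fin n) ℝ m) :
    IsPolyVF m (Φv m q) :=
  fun j => ⟨q j, (mem_restrictTotalDegree _ _ _).1 (q j).2, fun _ => rfl⟩

lemma pev_continuous (P : MvPolynomial (Fin n) ℝ) : Continuous (pev P) :=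
  (pev_contDiff P).continuous

lemma Φs_continuous (m : ℕ) (q : restrictTotalDegree (Fin n) ℝ m) : Continuous (Φs m q) :=
  pev_continuous _

lemma Φv_continuous (m : ℕ) (q : Fin n → restrictTotalDegree (Fin n) ℝ m) :
    Continuous (Φv m q) := by
  refine (PiLp.continuous_toLp 2 (fun _ : Fin n => ℝ)).comp (continuous_pi fun j => ?_)
  exact pev_continuous _

lemma exists_isL2Proj (hT : IsSimplex T) (m : ℕ) (f : E n → ℝ)
    (hf : MemLp f 2 (volume.restrict T)) : ∃ g, IsL2Proj m T f g := by
  obtain ⟨v, hv⟩ := exists_ortho (restrictTotalDegree (Fin n) ℝ m) (Φs m)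
    (fun q => memℒp_of_continuous (Φs_continuous m q) hT) f hf
  refine ⟨Φs m v, Φs_isPolyDeg m v, fun q hq => ?_⟩
  obtain ⟨P, hP, hPq⟩ := hq
  have : q = Φs m ⟨P, (mem_restrictTotalDegree _ _ _).2 hP⟩ := funext fun x => hPq x
  rw [this]
  have := hv ⟨P, (mem_restrictTotalDegree _ _ _).2 hP⟩
  simpa [RCLike.inner_apply, mul_comm] using this

lemma exists_isL2ProjVF (hT : IsSimplex T) (m : ℕ) (f : E n → E n)
    (hf : MemLp f 2 (volume.restrict T)) : ∃ g, IsL2ProjVF m T f g := by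
  obtain ⟨v, hv⟩ := exists_ortho (Fin n → restrictTotalDegree (Fin n) ℝ m) (Φv m)
    (fun q => memℒp_of_continuous (Φv_continuous m q) hT) f hf
  refine ⟨Φv m v, Φv_isPolyVF m v, fun q hq => ?_⟩
  have hw : ∀ j, ∃ P : MvPolynomial (Fin n) ℝ, P.totalDegree ≤ m ∧
      ∀ x : E n, q x j = MvPolynomial.eval (fun i => x i) P := hq
  choose P hP hPq using hw
  have : q = Φv m (fun j => ⟨P j, (mem_restrictTotalDegree _ _ _).2 (hP j)⟩) := by
    funext x; ext j; exact hPq j x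
  rw [this]
  exact hv _

lemma IsPolyDeg.eq_pev {m : ℕ} {g : E n → ℝ} (hg : IsPolyDeg m g) :
    ∃ P : MvPolynomial (Fin n) ℝ, P.totalDegree ≤ m ∧ g = pev P := by
  obtain ⟨P, h1, h2⟩ := hg
  exact ⟨P, h1, funext h2⟩

lemma IsPolyDeg.sub {m : ℕ} {g h : E n → ℝ} (hg : IsPolyDeg m g) (hh : IsPolyDeg m h) :
    IsPolyDeg m (fun x => g x - h x) := by
  obtain ⟨P, hP1, hP2⟩ := hg
  obtain ⟨Q, hQ1, hQ2⟩ := hh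
  refine ⟨P - Q, le_trans (totalDegree_sub P Q) (max_le hP1 hQ1), fun x => ?_⟩
  simp [hP2 x, hQ2 x]

lemma IsPolyVF.sub {m : ℕ} {g h : E n → E n} (hg : IsPolyVF m g) (hh : IsPolyVF m h) :
    IsPolyVF m (fun x => g x - h x) := fun j => (hg j).sub (hh j)

lemma IsPolyDeg.gradient_isPolyVF {m : ℕ} {g : E n → ℝ} (hg : IsPolyDeg (m + 1) g) :
    IsPolyVF m (gradient g) := by
  obtain ⟨P, hP1, rfl⟩ := hg.eq_pev
  rw [pev_gradient]
  exact fun j => ⟨pderiv j P, totalDegree_pderiv_le j P hP1, fun x => rfl⟩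

lemma IsPolyDeg.gradient_continuous {m : ℕ} {g : E n → ℝ} (hg : IsPolyDeg m g) :
    Continuous (gradient g) := by
  obtain ⟨P, hP1, rfl⟩ := hg.eq_pev
  rw [pev_gradient]
  refine (PiLp.continuous_toLp 2 (fun _ : Fin n => ℝ)).comp (continuous_pi fun j => ?_)
  exact pev_continuous _

lemma IsPolyVF.continuous {m : ℕ} {g : E n → E n} (hg : IsPolyVF m g) : Continuous g := by
  have : ∀ j, Continuous (fun x => g x j) := by
    intro j
    obtain ⟨P, hP1, hP2⟩ := hg j
    have : (fun x => g x j) = pev P := funext hP2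
    rw [this]; exact pev_continuous P
  have h2 : Continuous (fun x => (fun j => g x j : Fin n → ℝ)) := continuous_pi this
  exact (PiLp.continuous_toLp 2 (fun _ : Fin n => ℝ)).comp h2

lemma ContDiff.gradient_continuous' {f : E n → ℝ} (hf : ContDiff ℝ (⊤:ℕ∞) f) :
    Continuous (gradient f) :=
  (LinearIsometryEquiv.continuous _).comp (hf.continuous_fderiv (by simp))

lemma gradient_sub_eq {f g : E n → ℝ} (hf : ContDiff ℝ (⊤:ℕ∞) f) {m : ℕ} (hg : IsPolyDeg m g) :
    gradient (f - g) = fun x => gradient f x - gradient g x := by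
  obtain ⟨P, hP1, rfl⟩ := hg.eq_pev
  funext x
  have h1 : HasGradientAt f (gradient f x) x :=
    ((hf.differentiable (by simp)) x).hasGradientAt
  have h2 := pev_hasGradientAt P x
  have h3 : HasFDerivAt (fun y => f y - pev P y)
      (toDual ℝ (E n) (gradient f x) - toDual ℝ (E n) (pgrad P x)) x :=
    h1.hasFDerivAt.sub h2.hasFDerivAt
  rw [← map_sub] at h3
  have h4 := h3.hasGradientAt
  rw [LinearIsometryEquiv.symm_apply_apply] at h4
  have h5 : HasGradientAt (f - pev P) (gradient f x - pgrad P x) x := h4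
  rw [h5.gradient, pev_gradient]

/-- nonzero polynomials are not a.e. zero on a simplex -/
lemma pev_ne_zero_ae (hT : IsSimplex T) {R : MvPolynomial (Fin n) ℝ} (hR : R ≠ 0)
    (hae : pev R =ᵐ[volume.restrict T] 0) : False := by
  have hzero : ∀ x ∈ interior T, pev R x = 0 := by
    intro x hx
    by_contra hne
    have hopen : IsOpen ({y | pev R y ≠ 0} ∩ interior T) :=
      (isOpen_ne_fun (pev_continuous R) continuous_const).inter isOpen_interior
    have hnon : ({y | pev R y ≠ 0} ∩ interior T).Nonempty := ⟨x, hne, hx⟩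
    have hpos : 0 < volume ({y | pev R y ≠ 0} ∩ interior T) := hopen.measure_pos volume hnon
    have hnull : volume.restrict T {y | pev R y ≠ 0} = 0 := by
      rw [Filter.eventuallyEq_iff_exists_mem] at hae
      obtain ⟨s, hs, hsub⟩ := hae
      rw [mem_ae_iff] at hs
      refine measure_mono_null (fun y hy => ?_) hs
      intro hys
      exact hy (hsub hys)
    have : volume.restrict T ({y | pev R y ≠ 0} ∩ interior T) = 0 :=
      measure_mono_null Set.inter_subset_left hnull
    rw [Measure.restrict_apply' hT.measurableSet] at this
    have hTsub : ({y | pev R y ≠ 0} ∩ interior T) ∩ T = {y | pev R y ≠ 0} ∩ interior T :=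
      Set.inter_eq_left.2 ((Set.inter_subset_right).trans interior_subset)
    rw [hTsub] at this
    exact absurd this hpos.ne'
  -- identity theorem
  obtain ⟨x₀, hx₀⟩ := hT.interior_nonempty
  have hev : pev R =ᶠ[nhds x₀] 0 := by
    filter_upwards [isOpen_interior.mem_nhds hx₀] with y hy
    exact hzero y hy
  have hall := (pev_analyticOnNhd R).eqOn_zero_of_preconnected_of_eventuallyEq_zero
    isPreconnected_univ (Set.mem_univ x₀) hev
  have : R = 0 := by
    apply MvPolynomial.funext
    intro y
    have := hall (Set.mem_univ ((WithLp.equiv 2 (Fin n → ℝ)).symm y))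
    simpa [pev] using this
  exact hR this

lemma L2_congr {α : Type*} [NormedAddCommGroup α] {g h : E n → α} (hgh : ∀ x, g x = h x) :
    L2 T g = L2 T h := by rw [show g = h from funext hgh]

lemma C_ge_one (hn : 0 < n) (p : ℕ) (hT : IsSimplex T) (C : ℝ)
    (hstab : ∀ f : E n → ℝ, ContDiff ℝ (⊤ : ℕ∞) f →
      ∀ g₁ : E n → ℝ, IsL2Proj (p + 1) T f g₁ →
        ∀ g₂ : E n → E n, IsL2ProjVF p T (gradient f) g₂ →
          L2 T (gradient (f - g₁)) ≤ C * L2 T (fun x => gradient f x - g₂ x)) :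
    1 ≤ C := by
  haveI := isSimplex_finiteMeasure hT
  set μ := volume.restrict T with hμ
  set i0 : Fin n := ⟨0, hn⟩
  set R₀ : MvPolynomial (Fin n) ℝ := X i0 ^ (p + 2) with hR₀
  set f₀ : E n → ℝ := pev R₀ with hf₀def
  have hf₀ : ContDiff ℝ (⊤:ℕ∞) f₀ := pev_contDiff R₀
  have hA : MemLp (gradient f₀) 2 μ := memℒp_of_continuous hf₀.gradient_continuous' hT
  obtain ⟨g10, hg10⟩ := exists_isL2Proj hT (p+1) f₀ (memℒp_of_continuous hf₀.continuous hT)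
  obtain ⟨π₀, hπ₀⟩ := exists_isL2ProjVF hT p (gradient f₀) hA
  have hst := hstab f₀ hf₀ g10 hg10 π₀ hπ₀
  have hB : MemLp π₀ 2 μ := memℒp_of_continuous hπ₀.1.continuous hT
  have hG : MemLp (gradient g10) 2 μ := memℒp_of_continuous hg10.1.gradient_continuous hT
  set A := hA.toLp _ with hAdef
  set B := hB.toLp _ with hBdef
  set G := hG.toLp _ with hGdef
  -- identities
  have e2 : L2 T (fun x => gradient f₀ x - π₀ x) = ‖A - B‖ := by
    rw [← MemLp.toLp_sub hA hB]
    exact L2_eq_norm_toLp (hA.sub hB)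
  have e1 : L2 T (gradient (f₀ - g10)) = ‖A - G‖ := by
    rw [L2_congr (fun x => congrFun (gradient_sub_eq hf₀ hg10.1) x), ← MemLp.toLp_sub hA hG]
    exact L2_eq_norm_toLp (hA.sub hG)
  -- orthogonality
  have h0 : (inner ℝ (A - B) (G - B) : ℝ) = 0 := by
    rw [← MemLp.toLp_sub hA hB, ← MemLp.toLp_sub hG hB, inner_toLp (hA.sub hB) (hG.sub hB)]
    exact hπ₀.2 _ ((hg10.1.gradient_isPolyVF).sub hπ₀.1)
  have hAG : A - G = (A - B) - (G - B) := by abel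
  have hsq : ‖A - G‖^2 = ‖A - B‖^2 + ‖G - B‖^2 := by
    rw [hAG, norm_sub_sq_real, h0]; ring
  have hle : ‖A - B‖ ≤ ‖A - G‖ := by
    nlinarith [norm_nonneg (A - G), norm_nonneg (A - B), sq_nonneg ‖G - B‖]
  -- positivity
  have hpos : 0 < ‖A - B‖ := by
    rcases (norm_nonneg (A - B)).lt_or_eq with h | h
    · exact h
    · exfalso
      have hAB : A = B := by
        have := norm_sub_eq_zero_iff.mp h.symm
        exact this
      have hae : gradient f₀ =ᵐ[μ] π₀ := by
        rw [hAdef, hBdef, MemLp.toLp_eq_toLp_iff] at hAB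
        exact hAB
      obtain ⟨Q, hQdeg, hQev⟩ := hπ₀.1 i0
      set R' : MvPolynomial (Fin n) ℝ := pderiv i0 R₀ - Q with hR'
      have hR'ae : pev R' =ᵐ[μ] 0 := by
        filter_upwards [hae] with x hx
        have h1 : gradient f₀ x i0 = pev (pderiv i0 R₀) x := by
          rw [hf₀def, pev_gradient]; rfl
        have h2 : π₀ x i0 = pev Q x := hQev x
        have h3 : gradient f₀ x i0 = π₀ x i0 := congrArg (· i0) hx
        show pev R' x = 0
        have : pev R' x = pev (pderiv i0 R₀) x - pev Q x := by simp [hR', pev]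
        rw [this, ← h1, ← h2, h3, sub_self]
      have hR'ne : R' ≠ 0 := by
        intro hzero
        have hQeq : pderiv i0 R₀ = Q := by rwa [hR', sub_eq_zero] at hzero
        have hco1 : coeff (Finsupp.single i0 (p+1)) (pderiv i0 R₀) = ((p:ℝ) + 2) := by
          rw [hR₀, X_pow_eq_monomial, pderiv_monomial_single]
          rw [show (p + 2) - 1 = p + 1 from rfl]
          rw [coeff_monomial]
          simp
        have hco2 : coeff (Finsupp.single i0 (p+1)) Q = 0 := by
          apply coeff_eq_zero_of_totalDegree_lt
          refine lt_of_le_of_lt hQdeg ?_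
          have hss : ∑ x ∈ (Finsupp.single i0 (p+1)).support, (Finsupp.single i0 (p+1)) x = p+1 := by
            rw [Finsupp.support_single_ne_zero _ (by omega : p+1 ≠ 0)]
            simp
          rw [hss]
          omega
        rw [hQeq, hco2] at hco1
        nlinarith [(Nat.cast_nonneg p : (0:ℝ) ≤ p), hco1]
      exact pev_ne_zero_ae hT hR'ne hR'ae
  -- conclude
  have hchain : ‖A - B‖ ≤ C * ‖A - B‖ := by
    calc ‖A - B‖ ≤ ‖A - G‖ := hle
    _ = L2 T (gradient (f₀ - g10)) := e1.symm
    _ ≤ C * L2 T (fun x => gradient f₀ x - π₀ x) := hst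
    _ = C * ‖A - B‖ := by rw [e2]
  nlinarith [hpos, hchain]


/-- `‖Π_{p+1}‖ ≤ C_{st,1}` for the `H¹`-seminorm operator norm.
If `C ≥ 0` satisfies `‖∇(f − Π_{p+1} f)‖ ≤ C ‖∇f − Π_p ∇f‖` in `L²(T;ℝ^n)` for all smooth `f`,
then also `‖∇(Π_{p+1} f)‖ ≤ C ‖∇f‖` in `L²(T;ℝ^n)` for all smooth `f`. -/
theorem projection_H1_norm_le_stability_constant (n p : ℕ) (T : Set (E n)) (hT : IsSimplex T)
    (C : ℝ) (hC : 0 ≤ C)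
    (hstab : ∀ f : E n → ℝ, ContDiff ℝ (⊤ : ℕ∞) f →
      ∀ g₁ : E n → ℝ, IsL2Proj (p + 1) T f g₁ →
        ∀ g₂ : E n → E n, IsL2ProjVF p T (gradient f) g₂ →
          L2 T (gradient (f - g₁)) ≤ C * L2 T (fun x => gradient f x - g₂ x)) :
    ∀ f : E n → ℝ, ContDiff ℝ (⊤ : ℕ∞) f →
      ∀ g₁ : E n → ℝ, IsL2Proj (p + 1) T f g₁ →
        L2 T (gradient g₁) ≤ C * L2 T (gradient f) := by
  intro f hf g₁ hg₁
  rcases Nat.eq_zero_or_pos n with hn | hn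
  · -- degenerate case: E 0 is trivial
    subst hn
    have hz : ∀ (g : E 0 → ℝ) (x : E 0), ‖gradient g x‖ ^ 2 = 0 := by
      intro g x
      rw [show gradient g x = 0 from Subsingleton.elim _ _, norm_zero]
      norm_num
    have h1 : L2 T (gradient g₁) = 0 := by
      unfold L2
      rw [integral_congr_ae (Filter.Eventually.of_forall fun x => hz g₁ x)]
      simp
    rw [h1]
    apply mul_nonneg hC
    apply Real.sqrt_nonneg
  · -- main case
    haveI := isSimplex_finiteMeasure hT
    set μ := volume.restrict T with hμ
    have hC1 : 1 ≤ C := C_ge_one hn p hT C hstab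
    obtain ⟨g₂, hg₂⟩ := exists_isL2ProjVF hT p (gradient f)
      (memℒp_of_continuous hf.gradient_continuous' hT)
    have hst := hstab f hf g₁ hg₁ g₂ hg₂
    have hA : MemLp (gradient f) 2 μ := memℒp_of_continuous hf.gradient_continuous' hT
    have hB : MemLp g₂ 2 μ := memℒp_of_continuous hg₂.1.continuous hT
    have hG : MemLp (gradient g₁) 2 μ := memℒp_of_continuous hg₁.1.gradient_continuous hT
    set A := hA.toLp _ with hAdef
    set B := hB.toLp _ with hBdef
    set G := hG.toLp _ with hGdef
    have e2 : L2 T (fun x => gradient f x - g₂ x) = ‖A - B‖ := by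
      rw [← MemLp.toLp_sub hA hB]
      exact L2_eq_norm_toLp (hA.sub hB)
    have e1 : L2 T (gradient (f - g₁)) = ‖A - G‖ := by
      rw [L2_congr (fun x => congrFun (gradient_sub_eq hf hg₁.1) x), ← MemLp.toLp_sub hA hG]
      exact L2_eq_norm_toLp (hA.sub hG)
    have e3 : L2 T (gradient g₁) = ‖G‖ := L2_eq_norm_toLp hG
    have e4 : L2 T (gradient f) = ‖A‖ := L2_eq_norm_toLp hA
    -- orthogonality
    have horth : ∀ (q : E n → E n) (hq : IsPolyVF p q) (hqm : MemLp q 2 μ),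
        (inner ℝ (A - B) (hqm.toLp q) : ℝ) = 0 := by
      intro q hq hqm
      rw [← MemLp.toLp_sub hA hB, inner_toLp (hA.sub hB) hqm]
      exact hg₂.2 q hq
    have h0G : (inner ℝ (A - B) (G - B) : ℝ) = 0 := by
      rw [← MemLp.toLp_sub hG hB]
      exact horth _ ((hg₁.1.gradient_isPolyVF).sub hg₂.1) (hG.sub hB)
    have h0B : (inner ℝ (A - B) B : ℝ) = 0 := horth _ hg₂.1 hB
    -- Pythagoras
    have hAG : A - G = (A - B) - (G - B) := by abel
    have hsq1 : ‖A - G‖^2 = ‖A - B‖^2 + ‖G - B‖^2 := by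
      rw [hAG, norm_sub_sq_real, h0G]; ring
    have hsq2 : ‖A‖^2 = ‖A - B‖^2 + ‖B‖^2 := by
      have h := norm_add_sq_real (A - B) B
      rw [h0B, sub_add_cancel] at h
      linarith
    have hGle : ‖G‖ ≤ ‖G - B‖ + ‖B‖ := by
      have h := norm_add_le (G - B) B
      rwa [sub_add_cancel] at h
    rw [e1, e2] at hst
    rw [e3, e4]
    set a := ‖B‖
    set b := ‖A - B‖
    set d := ‖G - B‖
    rcases (norm_nonneg (A - B)).lt_or_eq with hb | hb
    · -- b > 0
      have hb2 : b^2 + d^2 ≤ C^2 * b^2 := by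
        nlinarith [norm_nonneg (A - G), hst, hsq1]
      have hkey : (d + a)^2 ≤ (C * ‖A‖)^2 := by
        have h1 : b^2 * (d+a)^2 ≤ (a^2+b^2) * (b^2+d^2) := by
          nlinarith [sq_nonneg (b^2 - a*d)]
        have h2 : (a^2+b^2) * (b^2+d^2) ≤ (a^2+b^2) * (C^2*b^2) := by
          nlinarith [sq_nonneg a, sq_nonneg b, hb2]
        nlinarith [hsq2, h1, h2, mul_pos hb hb]
      have hfin : d + a ≤ C * ‖A‖ := by
        nlinarith [hkey, norm_nonneg (G - B), norm_nonneg B, norm_nonneg A,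
          mul_nonneg hC (norm_nonneg A)]
      linarith [hGle, hfin]
    · -- b = 0
      have hAGz : ‖A - G‖ = 0 := by
        have hble : ‖A - G‖ ≤ C * b := hst
        have hcb : C * b = 0 := by rw [show b = 0 from hb.symm]; ring
        rw [hcb] at hble
        exact le_antisymm hble (norm_nonneg _)
      have : A = G := by
        rwa [norm_sub_eq_zero_iff] at hAGz
      rw [← this]
      nlinarith [norm_nonneg A, hC1]

end
end

section
/- Let H be a real Hilbert space and P : H → H a continuous linear map that is idempotent (P ∘ P = P) with P ≠ 0 and P ≠ id. Then the operator norms of P and of id − P coincide: ‖P‖ = ‖id − P‖. (Kato's oblique projection lemma, used to identify ‖Π_{p+1}‖ = ‖1 − Π_{p+1}‖ in the quotient space H¹(T)/ℝ.) -/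
open RealInnerProductSpace

lemma kato_aux (a b c : ℝ) (ha : 0 ≤ a) (hb : 0 ≤ b) (hc : 1 ≤ c)
    (h : ∀ s : ℝ, (1+s)^2 * a ≤ c^2 * (b + s^2 * a)) : a ≤ (c^2 - 1) * b := by
  rcases eq_or_lt_of_le ha with ha0 | ha0
  · have : 0 ≤ (c^2 - 1) * b := mul_nonneg (by nlinarith) hb
    linarith
  rcases eq_or_lt_of_le hc with hc1 | hc1
  · exfalso
    have h2 := h (b/a)
    rw [← hc1] at h2
    have h3 : (a + b)^2 ≤ a*b + b^2 := by
      have e : (1 + b/a)^2 * a * a = (a+b)^2 := by field_simp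
      have e2 : (b/a)^2 * a * a = b^2 := by field_simp
      nlinarith [mul_le_mul_of_nonneg_right h2 (le_of_lt ha0)]
    nlinarith
  · have hc2 : 0 < c^2 - 1 := by nlinarith
    have h2 := h (1/(c^2-1))
    have ht : (1/(c^2-1)) * (c^2-1) = 1 := one_div_mul_cancel hc2.ne'
    have l1 : (1+(1/(c^2-1)))^2 * a * (c^2-1)^2 = c^2*c^2*a := by
      calc (1+(1/(c^2-1)))^2 * a * (c^2-1)^2
          = ((c^2-1) + (1/(c^2-1))*(c^2-1))^2 * a := by ring
        _ = c^2*c^2*a := by rw [ht]; ring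
    have l2 : c^2 * (b + (1/(c^2-1))^2 * a) * (c^2-1)^2
        = c^2*b*(c^2-1)^2 + c^2*a := by
      calc c^2 * (b + (1/(c^2-1))^2 * a) * (c^2-1)^2
          = c^2*b*(c^2-1)^2 + c^2*(((1/(c^2-1))*(c^2-1))^2)*a := by ring
        _ = c^2*b*(c^2-1)^2 + c^2*a := by rw [ht]; ring
    have h4 : c^2*c^2*a ≤ c^2*b*(c^2-1)^2 + c^2*a := by
      rw [← l1, ← l2]
      exact mul_le_mul_of_nonneg_right h2 (by positivity)
    have hcpos : (0:ℝ) < c^2 := by positivity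
    nlinarith [mul_pos hcpos hc2]

lemma kato_key {H : Type*} [NormedAddCommGroup H] [InnerProductSpace ℝ H]
    [CompleteSpace H] (P : H →L[ℝ] H) (hidem : P.comp P = P) (h0 : P ≠ 0) :
    ‖ContinuousLinearMap.id ℝ H - P‖ ≤ ‖P‖ := by
  have hP : ∀ y, P (P y) = P y := fun y => by
    have := ContinuousLinearMap.ext_iff.mp hidem y
    simpa using this
  obtain ⟨y, hy⟩ : ∃ y, P y ≠ 0 := by
    by_contra h; push_neg at h; exact h0 (by ext z; simp [h z])
  have hc : 1 ≤ ‖P‖ := by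
    have h1 : ‖P (P y)‖ ≤ ‖P‖ * ‖P y‖ := P.le_opNorm _
    rw [hP y] at h1
    have := norm_pos_iff.mpr hy
    nlinarith
  apply ContinuousLinearMap.opNorm_le_bound _ (le_trans zero_le_one hc)
  intro x
  set Q : H →L[ℝ] H := ContinuousLinearMap.id ℝ H - P with hQ
  set K : Submodule ℝ H := LinearMap.ker (Q : H →ₗ[ℝ] H) with hK
  have hKmem : ∀ z, z ∈ K ↔ Q z = 0 := fun z => LinearMap.mem_ker
  set n : H := x - (K.orthogonalProjectionOnto x : H) with hn
  have hn_orth : ∀ m ∈ K, ⟪m, n⟫ = 0 := fun m hm =>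
    (Submodule.mem_orthogonal K n).mp (Submodule.sub_starProjection_mem_orthogonal (K := K) x) m hm
  have hPn_mem : P n ∈ K := by
    rw [hKmem]; simp [hQ, hP]
  have hEx_mem : (K.orthogonalProjectionOnto x : H) ∈ K := Submodule.coe_mem _
  have hQx : Q x = Q n := by
    have h1 : Q (x - n) = 0 := (hKmem _).mp (by rw [hn]; simpa using hEx_mem)
    rw [map_sub, sub_eq_zero] at h1
    exact h1
  -- ‖n‖ ≤ ‖x‖
  have hnorm_x : ‖n‖ ≤ ‖x‖ := by
    have horth : ⟪(K.orthogonalProjectionOnto x : H), n⟫ = 0 := hn_orth _ hEx_mem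
    have hx : (K.orthogonalProjectionOnto x : H) + n = x := by rw [hn]; abel
    have hsum : ‖(K.orthogonalProjectionOnto x : H) + n‖^2
        = ‖(K.orthogonalProjectionOnto x : H)‖^2 + ‖n‖^2 := by
      rw [@norm_add_sq_real, horth]; ring
    rw [hx] at hsum
    nlinarith [norm_nonneg x, norm_nonneg n, sq_nonneg ‖(K.orthogonalProjectionOnto x : H)‖]
  have hinner : ⟪P n, n⟫ = 0 := hn_orth _ hPn_mem
  -- key scalar inequality
  have hkey : ∀ s : ℝ, (1+s)^2 * ‖P n‖^2 ≤ ‖P‖^2 * (‖n‖^2 + s^2 * ‖P n‖^2) := by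
    intro s
    have h1 : P (n + s • P n) = (1+s) • P n := by
      rw [map_add, map_smul, hP]
      module
    have h2 : ‖P (n + s • P n)‖ ≤ ‖P‖ * ‖n + s • P n‖ := P.le_opNorm _
    rw [h1] at h2
    have hns : ⟪n, P n⟫ = 0 := by rw [real_inner_comm]; exact hinner
    have h3 : ‖n + s • P n‖^2 = ‖n‖^2 + s^2 * ‖P n‖^2 := by
      rw [@norm_add_sq_real, real_inner_smul_right, hns, norm_smul,
        Real.norm_eq_abs, mul_pow, sq_abs]
      ring
    have h4 : ‖(1+s) • P n‖^2 = (1+s)^2 * ‖P n‖^2 := by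
      rw [norm_smul, Real.norm_eq_abs, mul_pow, sq_abs]
    nlinarith [norm_nonneg (n + s • P n), norm_nonneg ((1+s) • P n),
      mul_le_mul h2 h2 (norm_nonneg _) (by positivity)]
  have haux := kato_aux (‖P n‖^2) (‖n‖^2) ‖P‖ (by positivity) (by positivity) hc hkey
  -- ‖Q x‖^2 = ‖n‖^2 + ‖P n‖^2
  have hQn : Q n = n - P n := by simp [hQ]
  have hQnorm : ‖Q x‖^2 = ‖n‖^2 + ‖P n‖^2 := by
    rw [hQx, hQn, @norm_sub_sq_real, real_inner_comm, hinner]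
    ring
  have hfinal : ‖Q x‖^2 ≤ (‖P‖ * ‖x‖)^2 := by
    rw [hQnorm, mul_pow]
    have : ‖n‖^2 + ‖P n‖^2 ≤ ‖P‖^2 * ‖n‖^2 := by nlinarith
    have hnn : ‖n‖^2 ≤ ‖x‖^2 := by nlinarith [norm_nonneg n, norm_nonneg x]
    nlinarith [sq_nonneg ‖P‖]
  nlinarith [norm_nonneg (Q x), mul_nonneg (norm_nonneg P) (norm_nonneg x)]

/-- Kato's oblique projection lemma.
If `P` is a continuous linear idempotent on a real Hilbert space `H` with `P ≠ 0` and
`P ≠ id`, then `‖P‖ = ‖id − P‖` (operator norms). -/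
theorem kato_oblique_projection {H : Type*} [NormedAddCommGroup H] [InnerProductSpace ℝ H]
    [CompleteSpace H] (P : H →L[ℝ] H) (hidem : P.comp P = P)
    (h0 : P ≠ 0) (hid : P ≠ ContinuousLinearMap.id ℝ H) :
    ‖P‖ = ‖ContinuousLinearMap.id ℝ H - P‖ := by
  have hP : ∀ y, P (P y) = P y := fun y => by
    have := ContinuousLinearMap.ext_iff.mp hidem y
    simpa using this
  set Q : H →L[ℝ] H := ContinuousLinearMap.id ℝ H - P with hQ
  have hQidem : Q.comp Q = Q := by
    ext z; simp [hQ, hP, map_sub]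
  have hQ0 : Q ≠ 0 := fun h => hid (sub_eq_zero.mp h).symm
  have hPQ : ContinuousLinearMap.id ℝ H - Q = P := by rw [hQ]; abel
  have h1 := kato_key P hidem h0
  have h2 := kato_key Q hQidem hQ0
  rw [hPQ] at h2
  exact le_antisymm h2 h1
end
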